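/- Let I ⊆ ℝ be an interval, ω : I → ℝ, and k ∈ ℝ. Let x : I → ℝ be twice differentiable with x(t) ≠ 0 for all t ∈ I, satisfying the Milne–Pinney equation x'' = −ω(t)²·x + k/x³, and let y : I → ℝ be a twice differentiable solution of y'' = −ω(t)²·y. Then the quantity t ↦ (1/2)·((y(t)·x'(t) − x(t)·y'(t))² + k·(y(t)/x(t))²) is constant on I. -/

import Mathlib

/-! The Wronskian `W = y·x' − x·y'` of the pair only feels the nonlinear term of the Milne–Pinney
equation, `W' = k·y/x³`, while `(y/x)' = −W/x²`. Hence the derivative of `W²/2 + k(y/x)²/2` is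
`W·k·y/x³ − k·(y/x)·W/x² = 0`, and a function with vanishing derivative on an interval is constant.
-/

theorem Convex.eq_of_forall_hasDerivAt_zero {E : Type*} [NormedAddCommGroup E] [NormedSpace ℝ E]
    {s : Set ℝ} {f : ℝ → E} (hs : Convex ℝ s) (hf : ∀ t ∈ s, HasDerivAt f 0 t) :
    ∀ a ∈ s, ∀ b ∈ s, f a = f b := by
  intro a ha b hb
  have h := hs.norm_image_sub_le_of_norm_hasDerivWithin_le (C := 0)
    (fun t ht => (hf t ht).hasDerivWithinAt) (fun _ _ => by simp) hb ha
  rwa [zero_mul, norm_le_zero_iff, sub_eq_zero] at h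

section Wronskian

variable {x vx y vy : ℝ → ℝ} {ax ay t : ℝ}

theorem hasDerivAt_wronskian (hx : HasDerivAt x (vx t) t) (hvx : HasDerivAt vx ax t)
    (hy : HasDerivAt y (vy t) t) (hvy : HasDerivAt vy ay t) :
    HasDerivAt (fun s => y s * vx s - x s * vy s) (y t * ax - x t * ay) t :=
  ((hy.mul hvx).sub (hx.mul hvy)).congr_deriv (by ring)

theorem hasDerivAt_div_eq_neg_wronskian (hx : HasDerivAt x (vx t) t) (hy : HasDerivAt y (vy t) t)
    (hx0 : x t ≠ 0) :
    HasDerivAt (fun s => y s / x s) (-(y t * vx t - x t * vy t) / x t ^ 2) t :=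
  (hy.div hx hx0).congr_deriv (by ring)

end Wronskian

/-- The Ermakov invariant
`(1/2)·((y·x' − x·y')² + k·(y/x)²)` of the pair formed by a Milne–Pinney
solution `x'' = −ω(t)²·x + k/x³` and a harmonic oscillator solution
`y'' = −ω(t)²·y` is constant. -/
theorem milne_pinney_ermakov_invariant
    (I : Set ℝ) (hI : Convex ℝ I) (ω : ℝ → ℝ) (k : ℝ)
    (x vx y vy : ℝ → ℝ)
    (hx0 : ∀ t ∈ I, x t ≠ 0)
    (hx : ∀ t ∈ I, HasDerivAt x (vx t) t)
    (hvx : ∀ t ∈ I, HasDerivAt vx (-(ω t)^2 * x t + k / (x t)^3) t)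
    (hy : ∀ t ∈ I, HasDerivAt y (vy t) t)
    (hvy : ∀ t ∈ I, HasDerivAt vy (-(ω t)^2 * y t) t) :
    ∀ s ∈ I, ∀ t ∈ I,
      (1/2) * ((y s * vx s - x s * vy s)^2 + k * (y s / x s)^2)
        = (1/2) * ((y t * vx t - x t * vy t)^2 + k * (y t / x t)^2) := by
  refine hI.eq_of_forall_hasDerivAt_zero fun t ht => ?_
  have hxt := hx0 t ht
  have hW : HasDerivAt (fun s => y s * vx s - x s * vy s) (k * (y t / x t) / x t ^ 2) t :=
    (hasDerivAt_wronskian (hx t ht) (hvx t ht) (hy t ht) (hvy t ht)).congr_deriv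
      (by field_simp; ring)
  have hq := hasDerivAt_div_eq_neg_wronskian (hx t ht) (hy t ht) hxt
  refine (((hW.pow 2).add ((hq.pow 2).const_mul k)).const_mul (1 / 2)).congr_deriv ?_
  simp only [Nat.cast_ofNat, Nat.reduceSub, pow_one]
  field_simp
  ring
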